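/- There exist constants 0 < c ≤ C and a₀ ∈ (0,1) such that for every a ∈ (0, a₀), the largest eigenvalue of the logarithmic potential operator on the open disc D_a ⊂ ℝ² of radius a centered at the origin satisfies c · a² · |log a| ≤ λ₀(D_a) ≤ C · a² · |log a|. -/

import Mathlib

open MeasureTheory Real

noncomputable section

/-- Points of the plane. -/
abbrev Pt2 := EuclideanSpace ℝ (Fin 2)

/-- The logarithmic kernel `-(1/(2π)) log |x - y|` in dimension 2. -/
def logKernel (x y : Pt2) : ℝ := -(1 / (2 * π)) * Real.log (dist x y)

/-- The logarithmic potential operator `N_Ω`. -/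
def NOp (Ω : Set Pt2) (f : Pt2 → ℝ) (x : Pt2) : ℝ := ∫ y in Ω, logKernel x y * f y

/-- The quadratic form `⟨N_Ω u, u⟩` on `L²(Ω)`. -/
def quadForm (Ω : Set Pt2) (u : Lp ℝ 2 (volume.restrict Ω)) : ℝ :=
  ∫ x in Ω, NOp Ω u x * u x

/-- The `n`-th eigenvalue of the logarithmic potential operator, via the max–min principle:
`λ_n(Ω) = sup` over `(n+1)`-dimensional subspaces `Ξ` of `L²(Ω)` of
`inf` over nonzero `u ∈ Ξ` of `⟨N_Ω u, u⟩ / ‖u‖²`. -/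
def eigen2 (Ω : Set Pt2) (n : ℕ) : ℝ :=
  sSup {r : ℝ | ∃ Ξ : Submodule ℝ (Lp ℝ 2 (volume.restrict Ω)),
    Module.finrank ℝ ↥Ξ = n + 1 ∧
    r = sInf {q : ℝ | ∃ u ∈ Ξ, u ≠ 0 ∧ q = quadForm Ω u / ‖u‖ ^ 2}}

/-- The sandwich hypothesis: `Ω` is squeezed between two discs of radii comparable to `a`. -/
def Sandwich (c₁ c₂ a : ℝ) (Ω : Set Pt2) : Prop :=
  ∃ (z₁ z₂ : Pt2) (ρ₁ ρ₂ : ℝ),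
    c₁ * a ≤ ρ₁ ∧ ρ₁ ≤ c₂ * a ∧ c₁ * a ≤ ρ₂ ∧ ρ₂ ≤ c₂ * a ∧
    Metric.ball z₁ ρ₁ ⊆ Ω ∧ Ω ⊆ Metric.ball z₂ ρ₂

/-!
For `x, y ∈ D_a` we have `|x - y| < 2a`, so the kernel is bounded below by `-log (2a) / (2π)`;
testing the constant function `1` gives `λ₀(D_a) ≥ |D_a| · (-log (2a)) / (2π) = a² |log (2a)| / 2`.
For the upper bound, the layer-cake formula bounds every row integral
`∫_{D_a} |log |x - y|| dy / (2π)` by `a² |log a| / 2 + a² / 4`, since the superlevel sets of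
`-log |x - ·|` are discs of area `π e^{-2t}`. The Schur test turns this row bound for the symmetric
kernel into `|⟨N u, u⟩| ≤ (a² |log a| / 2 + a² / 4) ‖u‖²`, which bounds every Rayleigh quotient.
-/

open scoped ENNReal NNReal

theorem ENNReal.two_mul_le_add_sq (a b : ℝ≥0∞) : 2 * a * b ≤ a ^ 2 + b ^ 2 := by
  rcases eq_or_ne a ⊤ with rfl | ha
  · simp
  rcases eq_or_ne b ⊤ with rfl | hb
  · simp
  lift a to ℝ≥0 using ha
  lift b to ℝ≥0 using hb
  exact_mod_cast _root_.two_mul_le_add_sq a b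

theorem lintegral_mul_lintegral_le_of_symm {α : Type*} [MeasurableSpace α] {μ : Measure α}
    [SFinite μ] {K : α → α → ℝ≥0∞} (hK : Measurable (Function.uncurry K))
    (hsymm : ∀ x y, K x y = K y x) {M : ℝ≥0∞} (hM : ∀ᵐ x ∂μ, ∫⁻ y, K x y ∂μ ≤ M)
    {g : α → ℝ≥0∞} (hg : Measurable g) :
    ∫⁻ x, (∫⁻ y, K x y * g y ∂μ) * g x ∂μ ≤ M * ∫⁻ x, g x ^ 2 ∂μ := by
  have hKx : ∀ x, Measurable (K x) := fun x => hK.comp measurable_prodMk_left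
  set A := ∫⁻ x, ∫⁻ y, K x y * g x ^ 2 ∂μ ∂μ
  have hswap : ∫⁻ x, ∫⁻ y, K x y * g y ^ 2 ∂μ ∂μ = A := by
    rw [lintegral_lintegral_swap (by fun_prop)]
    simp_rw [hsymm]
    rfl
  -- AM-GM `2 g(x) g(y) ≤ g(x)² + g(y)²`; the two halves agree by symmetry of `K`.
  have hdouble : 2 * ∫⁻ x, (∫⁻ y, K x y * g y ∂μ) * g x ∂μ ≤ 2 * A :=
    calc 2 * ∫⁻ x, (∫⁻ y, K x y * g y ∂μ) * g x ∂μ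
        = ∫⁻ x, ∫⁻ y, K x y * (2 * g x * g y) ∂μ ∂μ := by
          rw [← lintegral_const_mul' _ _ ENNReal.ofNat_ne_top]
          refine lintegral_congr fun x => ?_
          rw [← lintegral_mul_const (g x) (by fun_prop : Measurable fun y => K x y * g y),
            ← lintegral_const_mul' _ _ ENNReal.ofNat_ne_top]
          refine lintegral_congr fun y => ?_
          ring
      _ ≤ ∫⁻ x, ∫⁻ y, K x y * g x ^ 2 + K x y * g y ^ 2 ∂μ ∂μ := by
          gcongr with x y
          rw [← mul_add]
          gcongr
          exact ENNReal.two_mul_le_add_sq _ _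
      _ = 2 * A := by
          have hmeas : Measurable fun x => ∫⁻ y, K x y * g x ^ 2 ∂μ :=
            (hK.mul ((hg.comp measurable_fst).pow_const 2)).lintegral_prod_right'
          rw [two_mul]
          nth_rw 2 [← hswap]
          rw [← lintegral_add_left hmeas]
          refine lintegral_congr fun x => lintegral_add_left (by fun_prop) _
  have hA : A ≤ M * ∫⁻ x, g x ^ 2 ∂μ :=
    calc A = ∫⁻ x, (∫⁻ y, K x y ∂μ) * g x ^ 2 ∂μ :=
          lintegral_congr fun x => lintegral_mul_const _ (hKx x)
      _ ≤ ∫⁻ x, M * g x ^ 2 ∂μ := by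
          refine lintegral_mono_ae ?_
          filter_upwards [hM] with x hx
          gcongr
      _ = M * ∫⁻ x, g x ^ 2 ∂μ := lintegral_const_mul _ (by fun_prop)
  exact (ENNReal.mul_le_mul_iff_right two_ne_zero ENNReal.ofNat_ne_top).1
    (hdouble.trans (by gcongr))

theorem lintegral_enorm_sq_eq_norm_sq {α E : Type*} [MeasurableSpace α] [NormedAddCommGroup E]
    {μ : Measure α} (u : Lp E 2 μ) : ∫⁻ x, ‖u x‖ₑ ^ 2 ∂μ = ENNReal.ofReal (‖u‖ ^ 2) := by
  have h := eLpNorm_nnreal_pow_eq_lintegral (f := u) (μ := μ) (p := 2) two_ne_zero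
  simp only [NNReal.coe_ofNat, ENNReal.rpow_ofNat] at h
  rw [← h, Lp.norm_def, ENNReal.ofReal_pow ENNReal.toReal_nonneg,
    ENNReal.ofReal_toReal (Lp.eLpNorm_ne_top u)]
  rfl

theorem abs_quadForm_le {Ω : Set Pt2} (hΩ : MeasurableSet Ω) {M : ℝ} (hM : 0 ≤ M)
    (hb : ∀ x ∈ Ω, ∫⁻ y in Ω, ‖logKernel x y‖ₑ ≤ ENNReal.ofReal M)
    (u : Lp ℝ 2 (volume.restrict Ω)) : |quadForm Ω u| ≤ M * ‖u‖ ^ 2 := by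
  have hK : Measurable (Function.uncurry fun x y => ‖logKernel x y‖ₑ) :=
    ((Real.measurable_log.comp measurable_dist).const_mul _).enorm
  have hschur := lintegral_mul_lintegral_le_of_symm hK
    (fun x y => by rw [logKernel, logKernel, dist_comm])
    ((ae_restrict_iff' hΩ).2 (Filter.Eventually.of_forall hb))
    (Lp.stronglyMeasurable u).measurable.enorm
  rw [lintegral_enorm_sq_eq_norm_sq, ← ENNReal.ofReal_mul hM] at hschur
  rw [← ENNReal.ofReal_le_ofReal_iff (by positivity), ← Real.enorm_eq_ofReal_abs]
  calc ‖quadForm Ω u‖ₑ ≤ ∫⁻ x in Ω, ‖NOp Ω u x‖ₑ * ‖u x‖ₑ := by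
        simpa only [quadForm, enorm_mul] using
          enorm_integral_le_lintegral_enorm (fun x => NOp Ω u x * u x)
    _ ≤ ∫⁻ x in Ω, (∫⁻ y in Ω, ‖logKernel x y‖ₑ * ‖u y‖ₑ) * ‖u x‖ₑ := by
        gcongr with x
        simpa only [NOp, enorm_mul] using
          enorm_integral_le_lintegral_enorm (fun y => logKernel x y * u y)
    _ ≤ _ := hschur

section Rayleigh

variable {Ω : Set Pt2}

theorem quadForm_smul (c : ℝ) (u : Lp ℝ 2 (volume.restrict Ω)) :
    quadForm Ω (c • u) = c ^ 2 * quadForm Ω u := by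
  have hNOp : ∀ x, NOp Ω ⇑(c • u) x = c * NOp Ω u x := fun x => by
    rw [NOp, NOp, ← integral_const_mul]
    refine integral_congr_ae ?_
    filter_upwards [Lp.coeFn_smul c u] with y hy
    rw [hy, Pi.smul_apply, smul_eq_mul]
    ring
  rw [quadForm, quadForm, ← integral_const_mul]
  refine integral_congr_ae ?_
  filter_upwards [Lp.coeFn_smul c u] with x hx
  rw [hNOp, hx, Pi.smul_apply, smul_eq_mul]
  ring

theorem quadForm_div_norm_sq_smul {c : ℝ} (hc : c ≠ 0) (u : Lp ℝ 2 (volume.restrict Ω)) :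
    quadForm Ω (c • u) / ‖c • u‖ ^ 2 = quadForm Ω u / ‖u‖ ^ 2 := by
  rw [quadForm_smul, norm_smul, mul_pow, Real.norm_eq_abs, sq_abs,
    mul_div_mul_left _ _ (pow_ne_zero 2 hc)]

theorem sInf_rayleigh_span_singleton {u : Lp ℝ 2 (volume.restrict Ω)} (hu : u ≠ 0) :
    sInf {q : ℝ | ∃ v ∈ Submodule.span ℝ {u}, v ≠ 0 ∧ q = quadForm Ω v / ‖v‖ ^ 2} =
      quadForm Ω u / ‖u‖ ^ 2 := by
  suffices h : {q : ℝ | ∃ v ∈ Submodule.span ℝ {u}, v ≠ 0 ∧ q = quadForm Ω v / ‖v‖ ^ 2} =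
      {quadForm Ω u / ‖u‖ ^ 2} by
    rw [h, csInf_singleton]
  ext q
  constructor
  · rintro ⟨v, hv, hv0, rfl⟩
    obtain ⟨c, rfl⟩ := Submodule.mem_span_singleton.1 hv
    exact quadForm_div_norm_sq_smul (left_ne_zero_of_smul hv0) u
  · rintro rfl
    exact ⟨u, Submodule.mem_span_singleton_self u, hu, rfl⟩

theorem sInf_rayleigh_le {M : ℝ} (hM : 0 ≤ M)
    (hquad : ∀ u : Lp ℝ 2 (volume.restrict Ω), |quadForm Ω u| ≤ M * ‖u‖ ^ 2)
    (Ξ : Submodule ℝ (Lp ℝ 2 (volume.restrict Ω))) :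
    sInf {q : ℝ | ∃ u ∈ Ξ, u ≠ 0 ∧ q = quadForm Ω u / ‖u‖ ^ 2} ≤ M := by
  rcases Set.eq_empty_or_nonempty {q : ℝ | ∃ u ∈ Ξ, u ≠ 0 ∧ q = quadForm Ω u / ‖u‖ ^ 2}
    with hempty | ⟨q, u, huΞ, hu, rfl⟩
  · rwa [hempty, Real.sInf_empty]
  have hbdd : BddBelow {q : ℝ | ∃ u ∈ Ξ, u ≠ 0 ∧ q = quadForm Ω u / ‖u‖ ^ 2} := by
    refine ⟨-M, ?_⟩
    rintro q ⟨v, -, hv, rfl⟩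
    rw [le_div_iff₀ (by positivity)]
    linarith [(abs_le.1 (hquad v)).1]
  refine (csInf_le hbdd ⟨u, huΞ, hu, rfl⟩).trans ?_
  rw [div_le_iff₀ (by positivity)]
  exact (abs_le.1 (hquad u)).2

theorem eigen2_le {M : ℝ} (hM : 0 ≤ M)
    (hquad : ∀ u : Lp ℝ 2 (volume.restrict Ω), |quadForm Ω u| ≤ M * ‖u‖ ^ 2) (n : ℕ) :
    eigen2 Ω n ≤ M :=
  Real.sSup_le (by rintro r ⟨Ξ, -, rfl⟩; exact sInf_rayleigh_le hM hquad Ξ) hM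

theorem quadForm_div_norm_sq_le_eigen2_zero {M : ℝ} (hM : 0 ≤ M)
    (hquad : ∀ u : Lp ℝ 2 (volume.restrict Ω), |quadForm Ω u| ≤ M * ‖u‖ ^ 2)
    {u : Lp ℝ 2 (volume.restrict Ω)} (hu : u ≠ 0) :
    quadForm Ω u / ‖u‖ ^ 2 ≤ eigen2 Ω 0 := by
  refine le_csSup ⟨M, ?_⟩ ⟨Submodule.span ℝ {u}, finrank_span_singleton hu, ?_⟩
  · rintro r ⟨Ξ, -, rfl⟩
    exact sInf_rayleigh_le hM hquad Ξ
  · rw [sInf_rayleigh_span_singleton hu]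

end Rayleigh

theorem setOf_lt_neg_log_dist_subset_ball {X : Type*} [PseudoMetricSpace X] (x : X) (t : ℝ) :
    {y | t < -Real.log (dist x y)} ⊆ Metric.ball x (Real.exp (-t)) := by
  intro y hy
  rw [Metric.mem_ball, dist_comm]
  rcases (dist_nonneg : 0 ≤ dist x y).eq_or_lt with h | h
  · rw [← h]
    exact Real.exp_pos _
  · exact (Real.log_lt_iff_lt_exp h).1 (by linarith [hy.out])

open Set in
theorem lintegral_ofReal_neg_log_dist_le {Ω : Set Pt2} (hΩ : MeasurableSet Ω) {x : Pt2}
    (hx : ∀ y ∈ Ω, dist x y ≤ 1) {T : ℝ} (hT : 0 ≤ T) :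
    ∫⁻ y in Ω, ENNReal.ofReal (-Real.log (dist x y)) ≤
      volume Ω * ENNReal.ofReal T + ENNReal.ofReal (π / 2 * Real.exp (-2 * T)) := by
  have hnn : 0 ≤ᵐ[volume.restrict Ω] fun y => -Real.log (dist x y) :=
    (ae_restrict_iff' hΩ).2 <| ae_of_all _ fun y hy =>
      neg_nonneg.2 (Real.log_nonpos dist_nonneg (hx y hy))
  rw [lintegral_eq_lintegral_meas_lt _ hnn (by fun_prop), ← Ioc_union_Ioi_eq_Ioi hT,
    lintegral_union measurableSet_Ioi Ioc_disjoint_Ioi_same]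
  gcongr ?_ + ?_
  · calc ∫⁻ t in Ioc 0 T, volume.restrict Ω {y | t < -Real.log (dist x y)}
        ≤ ∫⁻ t in Ioc 0 T, volume Ω :=
          lintegral_mono fun t =>
            (measure_mono (subset_univ _)).trans_eq (Measure.restrict_apply_univ _)
      _ = volume Ω * ENNReal.ofReal T := by rw [setLIntegral_const, Real.volume_Ioc, sub_zero]
  · calc ∫⁻ t in Ioi T, volume.restrict Ω {y | t < -Real.log (dist x y)}
        ≤ ∫⁻ t in Ioi T, ENNReal.ofReal (π * Real.exp (-2 * t)) := by
          refine lintegral_mono fun t => (Measure.restrict_apply_le _ _).trans <|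
            (measure_mono (setOf_lt_neg_log_dist_subset_ball x t)).trans_eq ?_
          rw [EuclideanSpace.volume_ball_fin_two, ← ENNReal.ofReal_pow (Real.exp_pos _).le,
            ← ENNReal.ofReal_mul (by positivity), ← Real.exp_nat_mul]
          ring_nf
      _ = ENNReal.ofReal (π / 2 * Real.exp (-2 * T)) := by
          rw [← ofReal_integral_eq_lintegral_ofReal
            ((integrableOn_exp_mul_Ioi (by norm_num) T).const_mul π)
            (ae_of_all _ fun t => by positivity), integral_const_mul,
            integral_exp_mul_Ioi (by norm_num)]
          ring_nf

theorem dist_lt_two_mul_of_mem_ball {X : Type*} [PseudoMetricSpace X] {x y z : X} {r : ℝ}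
    (hx : x ∈ Metric.ball z r) (hy : y ∈ Metric.ball z r) : dist x y < 2 * r := by
  rw [Metric.mem_ball] at hx hy
  linarith [dist_triangle x z y, dist_comm y z]

theorem lintegral_enorm_logKernel_ball_le {a : ℝ} (ha : 0 < a) (ha2 : a ≤ 1 / 2) {x : Pt2}
    (hx : x ∈ Metric.ball (0 : Pt2) a) :
    ∫⁻ y in Metric.ball (0 : Pt2) a, ‖logKernel x y‖ₑ ≤
      ENNReal.ofReal (a ^ 2 * |Real.log a| / 2 + a ^ 2 / 4) := by
  have hdist : ∀ y ∈ Metric.ball (0 : Pt2) a, dist x y ≤ 1 := fun y hy => by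
    linarith [dist_lt_two_mul_of_mem_ball hx hy]
  have hloga : |Real.log a| = -Real.log a := abs_of_neg (Real.log_neg ha (by linarith))
  calc ∫⁻ y in Metric.ball (0 : Pt2) a, ‖logKernel x y‖ₑ
      = ∫⁻ y in Metric.ball (0 : Pt2) a,
          ENNReal.ofReal (1 / (2 * π)) * ENNReal.ofReal (-Real.log (dist x y)) := by
        refine setLIntegral_congr_fun Metric.isOpen_ball.measurableSet fun y hy => ?_
        have hlog : Real.log (dist x y) ≤ 0 := Real.log_nonpos dist_nonneg (hdist y hy)
        rw [← ENNReal.ofReal_mul (by positivity), Real.enorm_eq_ofReal_abs, logKernel,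
          abs_of_nonneg (mul_nonneg_of_nonpos_of_nonpos (by simp [Real.pi_pos.le]) hlog)]
        ring_nf
    _ = ENNReal.ofReal (1 / (2 * π)) *
          ∫⁻ y in Metric.ball (0 : Pt2) a, ENNReal.ofReal (-Real.log (dist x y)) :=
        lintegral_const_mul' _ _ ENNReal.ofReal_ne_top
    _ ≤ ENNReal.ofReal (1 / (2 * π)) * (volume (Metric.ball (0 : Pt2) a) *
          ENNReal.ofReal |Real.log a| +
          ENNReal.ofReal (π / 2 * Real.exp (-2 * |Real.log a|))) := by
        gcongr
        exact lintegral_ofReal_neg_log_dist_le Metric.isOpen_ball.measurableSet hdist (abs_nonneg _)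
    _ = ENNReal.ofReal (a ^ 2 * |Real.log a| / 2 + a ^ 2 / 4) := by
        have hexp : Real.exp (-2 * |Real.log a|) = a ^ 2 := by
          rw [hloga, neg_mul_neg, ← Real.log_rpow ha, Real.exp_log (by positivity)]
          norm_num
        rw [hexp, EuclideanSpace.volume_ball_fin_two, ← ENNReal.ofReal_pow ha.le,
          ← ENNReal.ofReal_mul (by positivity), ← ENNReal.ofReal_mul (by positivity),
          ← ENNReal.ofReal_add (by positivity) (by positivity),
          ← ENNReal.ofReal_mul (by positivity)]
        congr 1
        field_simp
        ring

theorem neg_log_le_logKernel {x y : Pt2} {r : ℝ} (hxy : x ≠ y) (hr : dist x y ≤ r) :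
    -(1 / (2 * π)) * Real.log r ≤ logKernel x y :=
  mul_le_mul_of_nonpos_left (Real.log_le_log (dist_pos.2 hxy) hr) (by simp [Real.pi_pos.le])

theorem le_quadForm_one {Ω : Set Pt2} [IsFiniteMeasure (volume.restrict Ω)] (hΩ : MeasurableSet Ω)
    {c M : ℝ} (hc : ∀ x ∈ Ω, ∀ y ∈ Ω, x ≠ y → c ≤ logKernel x y)
    (hb : ∀ x ∈ Ω, ∫⁻ y in Ω, ‖logKernel x y‖ₑ ≤ ENNReal.ofReal M) :
    c * volume.real Ω ^ 2 ≤ quadForm Ω (Lp.const 2 (volume.restrict Ω) (1 : ℝ)) := by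
  have hK : Measurable (Function.uncurry logKernel) :=
    (Real.measurable_log.comp measurable_dist).const_mul _
  set potential : Pt2 → ℝ := fun x => ∫ y in Ω, logKernel x y
  have hquad_eq : quadForm Ω (Lp.const 2 (volume.restrict Ω) (1 : ℝ)) = ∫ x in Ω, potential x := by
    have hNOp : ∀ x, NOp Ω (Lp.const 2 (volume.restrict Ω) (1 : ℝ)) x = potential x := fun x =>
      integral_congr_ae <| by
        filter_upwards [Lp.coeFn_const 2 (volume.restrict Ω) (1 : ℝ)] with y hy
        rw [hy, Function.const_apply, mul_one]
    refine integral_congr_ae ?_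
    filter_upwards [Lp.coeFn_const 2 (volume.restrict Ω) (1 : ℝ)] with x hx
    rw [hNOp, hx, Function.const_apply, mul_one]
  have hpotential : ∀ x ∈ Ω, c * volume.real Ω ≤ potential x := fun x hx =>
    calc c * volume.real Ω = ∫ _ in Ω, c := by simp [mul_comm]
      _ ≤ potential x := by
        refine setIntegral_mono_on_ae (integrable_const c)
          ⟨(hK.comp measurable_prodMk_left).aestronglyMeasurable,
            (hb x hx).trans_lt ENNReal.ofReal_lt_top⟩ hΩ ?_
        filter_upwards [compl_mem_ae_iff.2 (measure_singleton x)] with y hyx hy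
        exact hc x hx y hy (Ne.symm hyx)
  have hint : Integrable potential (volume.restrict Ω) := by
    refine ⟨hK.stronglyMeasurable.integral_prod_right'.aestronglyMeasurable, ?_⟩
    refine (lintegral_mono_ae ?_).trans_lt (lintegral_const_lt_top (ENNReal.ofReal_ne_top (r := M)))
    filter_upwards [ae_restrict_mem hΩ] with x hx
    exact (enorm_integral_le_lintegral_enorm _).trans (hb x hx)
  calc c * volume.real Ω ^ 2 = ∫ _ in Ω, c * volume.real Ω := by
        rw [setIntegral_const, smul_eq_mul]
        ring
    _ ≤ ∫ x in Ω, potential x := setIntegral_mono_on (integrable_const _) hint hΩ hpotential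
    _ = _ := hquad_eq.symm

theorem abs_quadForm_ball_le {a : ℝ} (ha : 0 < a) (ha2 : a ≤ 1 / 2)
    (u : Lp ℝ 2 (volume.restrict (Metric.ball (0 : Pt2) a))) :
    |quadForm (Metric.ball (0 : Pt2) a) u| ≤ (a ^ 2 * |Real.log a| / 2 + a ^ 2 / 4) * ‖u‖ ^ 2 :=
  abs_quadForm_le Metric.isOpen_ball.measurableSet (by positivity)
    (fun _ hx => lintegral_enorm_logKernel_ball_le ha ha2 hx) u

theorem eigen2_ball_le {a : ℝ} (ha : 0 < a) (ha2 : a ≤ 1 / 2) (n : ℕ) :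
    eigen2 (Metric.ball (0 : Pt2) a) n ≤ a ^ 2 * |Real.log a| / 2 + a ^ 2 / 4 :=
  eigen2_le (by positivity) (abs_quadForm_ball_le ha ha2) n

theorem norm_Lp_const_one_sq {α : Type*} [MeasurableSpace α] {μ : Measure α}
    [IsFiniteMeasure μ] : ‖Lp.const 2 μ (1 : ℝ)‖ ^ 2 = μ.real Set.univ := by
  have h := lintegral_enorm_sq_eq_norm_sq (Lp.const 2 μ (1 : ℝ))
  rw [lintegral_congr_ae (g := fun _ => 1) ?_, lintegral_const, one_mul] at h
  · rw [measureReal_def, h, ENNReal.toReal_ofReal (sq_nonneg _)]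
  filter_upwards [Lp.coeFn_const 2 μ (1 : ℝ)] with x hx
  rw [hx, Function.const_apply, enorm_one, one_pow]

theorem le_eigen2_zero_ball {a : ℝ} (ha : 0 < a) (ha2 : a < 1 / 2) :
    a ^ 2 * -Real.log (2 * a) / 2 ≤ eigen2 (Metric.ball (0 : Pt2) a) 0 := by
  have : IsFiniteMeasure (volume.restrict (Metric.ball (0 : Pt2) a)) :=
    isFiniteMeasure_restrict.2 measure_ball_lt_top.ne
  set one := Lp.const 2 (volume.restrict (Metric.ball (0 : Pt2) a)) (1 : ℝ)
  have hvol : volume.real (Metric.ball (0 : Pt2) a) = π * a ^ 2 := by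
    rw [measureReal_def, EuclideanSpace.volume_ball_fin_two, ← ENNReal.ofReal_pow ha.le,
      ← ENNReal.ofReal_mul (by positivity), ENNReal.toReal_ofReal (by positivity), mul_comm]
  have hone : ‖one‖ ^ 2 = π * a ^ 2 :=
    (norm_Lp_const_one_sq.trans (measureReal_restrict_apply_univ _)).trans hvol
  have hone0 : one ≠ 0 := fun h => by
    have hpos : 0 < π * a ^ 2 := by positivity
    rw [← hone, h, norm_zero] at hpos
    norm_num at hpos
  have hquad : -(1 / (2 * π)) * Real.log (2 * a) * (π * a ^ 2) ^ 2 ≤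
      quadForm (Metric.ball (0 : Pt2) a) one := by
    rw [← hvol]
    exact le_quadForm_one Metric.isOpen_ball.measurableSet
      (fun x hx y hy hxy => neg_log_le_logKernel hxy (dist_lt_two_mul_of_mem_ball hx hy).le)
      (fun _ hx => lintegral_enorm_logKernel_ball_le ha ha2.le hx)
  calc a ^ 2 * -Real.log (2 * a) / 2
      = -(1 / (2 * π)) * Real.log (2 * a) * (π * a ^ 2) ^ 2 / ‖one‖ ^ 2 := by
        rw [hone]
        field_simp
    _ ≤ quadForm (Metric.ball (0 : Pt2) a) one / ‖one‖ ^ 2 := by gcongr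
    _ ≤ eigen2 (Metric.ball (0 : Pt2) a) 0 :=
      quadForm_div_norm_sq_le_eigen2_zero (by positivity) (abs_quadForm_ball_le ha ha2.le) hone0

/-- The largest eigenvalue of the logarithmic potential operator on the disc of radius `a`
centered at the origin is comparable to `a² |log a|`. -/
theorem eigen2_zero_disc_scaling :
    ∃ (c C a₀ : ℝ), 0 < c ∧ c ≤ C ∧ 0 < a₀ ∧ a₀ < 1 ∧
      ∀ a : ℝ, 0 < a → a < a₀ →
        c * a ^ 2 * |Real.log a| ≤ eigen2 (Metric.ball (0 : Pt2) a) 0 ∧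
          eigen2 (Metric.ball (0 : Pt2) a) 0 ≤ C * a ^ 2 * |Real.log a| := by
  refine ⟨1 / 4, 3 / 4, 1 / 4, by norm_num, by norm_num, by norm_num, by norm_num,
    fun a ha ha4 => ?_⟩
  have hloga : |Real.log a| = -Real.log a := abs_of_neg (Real.log_neg ha (by linarith))
  have hlog4 : Real.log 4 ≤ -Real.log a := by
    rw [← Real.log_inv]
    exact Real.log_le_log (by norm_num) (by rw [le_inv_comm₀ (by norm_num) ha]; linarith)
  have hlog4' : Real.log 4 = 2 * Real.log 2 := by
    rw [show (4 : ℝ) = 2 ^ 2 by norm_num, Real.log_pow, Nat.cast_ofNat]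
  constructor
  · calc 1 / 4 * a ^ 2 * |Real.log a| ≤ a ^ 2 * -Real.log (2 * a) / 2 := by
          rw [Real.log_mul two_ne_zero ha.ne', hloga]
          nlinarith [sq_nonneg a]
      _ ≤ eigen2 (Metric.ball (0 : Pt2) a) 0 := le_eigen2_zero_ball ha (by linarith)
  · have hlog4_ge_one : 1 ≤ Real.log 4 := by
      rw [Real.le_log_iff_exp_le (by norm_num)]
      linarith [Real.exp_one_lt_d9]
    calc eigen2 (Metric.ball (0 : Pt2) a) 0 ≤ a ^ 2 * |Real.log a| / 2 + a ^ 2 / 4 :=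
          eigen2_ball_le ha (by linarith) 0
      _ ≤ 3 / 4 * a ^ 2 * |Real.log a| := by
          rw [hloga]
          nlinarith [sq_nonneg a]

end
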